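/- arXiv:2512.24038 — 5 statements merged into one kernel-verified Lean document; each statement's English description precedes it below -/
import Mathlib

section
/- Let E and F be complete lattices and f : E × F → E × F a monotone function with components f₁ : E × F → E and f₂ : E × F → F. Then the least fixed point of f equals the pair (μx. f₁(x, μy. f₂(x,y)), μy. f₂(μx. f₁(x,y), y)), where μ denotes the least fixed point of a monotone function on a complete lattice. -/
/-- Least fixed point of `g` (Knaster-Tarski for monotone `g`). -/
def lfp {α : Type*} [CompleteLattice α] (g : α → α) : α := sInf {x | g x ≤ x}

lemma lfp_le {α : Type*} [CompleteLattice α] {g : α → α} {x : α} (h : g x ≤ x) :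
    lfp g ≤ x := sInf_le h

lemma map_lfp_le {α : Type*} [CompleteLattice α] {g : α → α} (hg : Monotone g) :
    g (lfp g) ≤ lfp g :=
  le_sInf fun x hx => (hg (sInf_le hx)).trans hx

lemma lfp_fixed {α : Type*} [CompleteLattice α] {g : α → α} (hg : Monotone g) :
    g (lfp g) = lfp g :=
  le_antisymm (map_lfp_le hg) (lfp_le (hg (map_lfp_le hg)))

lemma lfp_eq_of_isLeast {α : Type*} [CompleteLattice α] {g : α → α} {p : α}
    (hfix : g p ≤ p) (hleast : ∀ q, g q ≤ q → p ≤ q) : lfp g = p :=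
  le_antisymm (sInf_le hfix) (le_sInf fun q hq => hleast q hq)

theorem bekic_pair {E F : Type*} [CompleteLattice E] [CompleteLattice F]
    (f : E × F → E × F) (hf : Monotone f) :
    lfp f = (lfp (fun x => (f (x, lfp (fun y => (f (x, y)).2))).1),
             lfp (fun y => (f (lfp (fun x => (f (x, y)).1), y)).2)) := by
  set f1 : E → F → E := fun x y => (f (x, y)).1 with hf1
  set f2 : E → F → F := fun x y => (f (x, y)).2 with hf2
  have hm1 : ∀ {x x' y y'}, x ≤ x' → y ≤ y' → f1 x y ≤ f1 x' y' := by
    intro x x' y y' hx hy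
    exact (hf (Prod.mk_le_mk.mpr ⟨hx, hy⟩)).1
  have hm2 : ∀ {x x' y y'}, x ≤ x' → y ≤ y' → f2 x y ≤ f2 x' y' := by
    intro x x' y y' hx hy
    exact (hf (Prod.mk_le_mk.mpr ⟨hx, hy⟩)).2
  -- monotonicity of inner lfps
  have hL2 : ∀ {x x' : E}, x ≤ x' → lfp (f2 x) ≤ lfp (f2 x') := by
    intro x x' hx
    refine lfp_le ?_
    have : f2 x (lfp (f2 x')) ≤ f2 x' (lfp (f2 x')) := hm2 hx le_rfl
    exact this.trans (map_lfp_le (fun y y' hy => hm2 le_rfl hy))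
  have hL1 : ∀ {y y' : F}, y ≤ y' → lfp (fun x => f1 x y) ≤ lfp (fun x => f1 x y') := by
    intro y y' hy
    refine lfp_le ?_
    have : f1 (lfp (fun x => f1 x y')) y ≤ f1 (lfp (fun x => f1 x y')) y' := hm1 le_rfl hy
    exact this.trans (map_lfp_le (fun x x' hx => hm1 hx le_rfl))
  set g : E → E := fun x => f1 x (lfp (f2 x)) with hg
  set h : F → F := fun y => f2 (lfp (fun x => f1 x y)) y with hh
  have hgm : Monotone g := fun x x' hx => hm1 hx (hL2 hx)
  have hhm : Monotone h := fun y y' hy => hm2 (hL1 hy) hy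
  set a : E := lfp g with ha
  set b : F := lfp h with hb
  set b' : F := lfp (f2 a) with hb'
  set a' : E := lfp (fun x => f1 x b) with ha'
  -- (a, b') is a fixed point of f
  have hfix1 : f (a, b') = (a, b') := by
    have h2 : f2 a b' = b' := lfp_fixed (fun y y' hy => hm2 le_rfl hy)
    have h1 : f1 a b' = a := lfp_fixed hgm
    exact Prod.ext h1 h2
  -- (a', b) is a fixed point of f
  have hfix2 : f (a', b) = (a', b) := by
    have h1 : f1 a' b = a' := lfp_fixed (fun x x' hx => hm1 hx le_rfl)
    have h2 : f2 a' b = b := lfp_fixed hhm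
    exact Prod.ext h1 h2
  -- least among prefixed points
  have hleast : ∀ q : E × F, f q ≤ q → (a ≤ q.1 ∧ b' ≤ q.2) ∧ (a' ≤ q.1 ∧ b ≤ q.2) := by
    rintro ⟨x, y⟩ hq
    obtain ⟨h1, h2⟩ := hq
    simp only at h1 h2
    have hy : lfp (f2 x) ≤ y := lfp_le h2
    have hax : a ≤ x := lfp_le ((hm1 le_rfl hy).trans h1)
    have hby : b' ≤ y := lfp_le ((hm2 hax le_rfl).trans h2)
    have hx : lfp (fun x => f1 x y) ≤ x := lfp_le h1
    have hby2 : b ≤ y := lfp_le ((hm2 hx le_rfl).trans h2)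
    have hax2 : a' ≤ x := lfp_le ((hm1 le_rfl hby2).trans h1)
    exact ⟨⟨hax, hby⟩, ⟨hax2, hby2⟩⟩
  have e1 : lfp f = (a, b') :=
    lfp_eq_of_isLeast hfix1.le fun q hq => Prod.mk_le_mk.mpr (hleast q hq).1
  have e2 : lfp f = (a', b) :=
    lfp_eq_of_isLeast hfix2.le fun q hq => Prod.mk_le_mk.mpr (hleast q hq).2
  have : b' = b := by
    have := e1.symm.trans e2
    exact (Prod.mk.injEq _ _ _ _ ▸ this).2
  rw [e1, this]
end

section
/- Let E and F be complete lattices and f : E × F → E × F monotone with components f₁, f₂. Then the pair (μx. f₁(x, μy. f₂(x,y)), μy. f₂(μx. f₁(x,y), y)) is less than or equal to every fixed point of f. -/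
theorem bekic_le_fixed {E F : Type*} [CompleteLattice E] [CompleteLattice F]
    (f : E × F → E × F) (hf : Monotone f) :
    ∀ p : E × F, f p = p →
      (lfp (fun x => (f (x, lfp (fun y => (f (x, y)).2))).1),
       lfp (fun y => (f (lfp (fun x => (f (x, y)).1), y)).2)) ≤ p := by
  rintro ⟨a, b⟩ hp
  have h1 : (f (a, b)).1 = a := congrArg Prod.fst hp
  have h2 : (f (a, b)).2 = b := congrArg Prod.snd hp
  have hin2 : lfp (fun y => (f (a, y)).2) ≤ b := lfp_le (le_of_eq h2)
  have hin1 : lfp (fun x => (f (x, b)).1) ≤ a := lfp_le (le_of_eq h1)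
  constructor
  · exact lfp_le <| le_trans ((hf (Prod.mk_le_mk.mpr ⟨le_rfl, hin2⟩)).1) (le_of_eq h1)
  · exact lfp_le <| le_trans ((hf (Prod.mk_le_mk.mpr ⟨hin1, le_rfl⟩)).2) (le_of_eq h2)
end

section
/- Let E, F be complete lattices and f : E × F → E × F monotone with components f₁, f₂. Write a = μx. f₁(x, μy. f₂(x,y)) and b' = μy. f₂(μx. f₁(x,y), y). Then b' = μy. f₂(a, y). -/
lemma lfp_mono {α : Type*} [CompleteLattice α] {g h : α → α} (hgh : ∀ x, g x ≤ h x) :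
    lfp g ≤ lfp h := by
  apply sInf_le_sInf
  intro x hx
  exact le_trans (hgh x) hx

theorem bekic_snd_eq {E F : Type*} [CompleteLattice E] [CompleteLattice F]
    (f : E × F → E × F) (hf : Monotone f) (a : E) (b' : F)
    (ha : a = lfp (fun x => (f (x, lfp (fun y => (f (x, y)).2))).1))
    (hb : b' = lfp (fun y => (f (lfp (fun x => (f (x, y)).1), y)).2)) :
    b' = lfp (fun y => (f (a, y)).2) := by
  set B : E → F := fun x => lfp (fun y => (f (x, y)).2) with hB
  set A : F → E := fun y => lfp (fun x => (f (x, y)).1) with hA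
  have hmono2 : ∀ x : E, Monotone (fun y : F => (f (x, y)).2) :=
    fun x y1 y2 h => (hf (Prod.mk_le_mk.2 ⟨le_rfl, h⟩)).2
  have hmono1 : ∀ y : F, Monotone (fun x : E => (f (x, y)).1) :=
    fun y x1 x2 h => (hf (Prod.mk_le_mk.2 ⟨h, le_rfl⟩)).1
  have hBmono : Monotone B := fun x1 x2 h =>
    lfp_mono (fun y => (hf (Prod.mk_le_mk.2 ⟨h, le_rfl⟩)).2)
  have hAmono : Monotone A := fun y1 y2 h =>
    lfp_mono (fun x => (hf (Prod.mk_le_mk.2 ⟨le_rfl, h⟩)).1)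
  -- a' := A b'
  set a' : E := A b' with ha'
  have ha2 : a = lfp (fun x => (f (x, B x)).1) := ha
  have hb2 : b' = lfp (fun y => (f (A y, y)).2) := hb
  -- fixed point facts
  have hfix_a : (f (a, B a)).1 = a := by
    rw [ha2]
    exact lfp_fixed (fun x1 x2 h =>
      (hf (Prod.mk_le_mk.2 ⟨h, hBmono h⟩)).1)
  have hfix_Ba : (f (a, B a)).2 = B a := lfp_fixed (hmono2 a)
  have hfix_a' : (f (a', b')).1 = a' := lfp_fixed (hmono1 b')
  have hfix_b' : (f (a', b')).2 = b' := by
    rw [ha', hb2]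
    exact lfp_fixed (fun y1 y2 h =>
      (hf (Prod.mk_le_mk.2 ⟨hAmono h, h⟩)).2)
  -- minimality: both (a, B a) and (a', b') are least prefixed points of f
  have hmin : ∀ x : E, ∀ y : F, (f (x, y)).1 ≤ x → (f (x, y)).2 ≤ y →
      a ≤ x ∧ B a ≤ y ∧ a' ≤ x ∧ b' ≤ y := by
    intro x y h1 h2
    have hBx : B x ≤ y := lfp_le h2
    have hax : a ≤ x := by
      rw [ha2]
      exact lfp_le (le_trans (hf (Prod.mk_le_mk.2 ⟨le_rfl, hBx⟩)).1 h1)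
    have hBay : B a ≤ y := le_trans (hBmono hax) hBx
    have hAy : A y ≤ x := lfp_le h1
    have hb'y : b' ≤ y := by
      rw [hb2]
      exact lfp_le (le_trans (hf (Prod.mk_le_mk.2 ⟨hAy, le_rfl⟩)).2 h2)
    exact ⟨hax, hBay, le_trans (hAmono hb'y) hAy, hb'y⟩
  have h1 := hmin a' b' hfix_a'.le hfix_b'.le
  have h2 := hmin a (B a) hfix_a.le hfix_Ba.le
  have : b' = B a := le_antisymm h2.2.2.2 h1.2.1
  rw [this]
end

section
/- Let L₁, L₂, L₃ be complete lattices and f monotone on L₁ × L₂ × L₃ with components f₁, f₂, f₃. Fix a₁ ∈ L₁ and let g : L₂ × L₃ → L₂ × L₃ be the specialization g(y,z) = (f₂(a₁,y,z), f₃(a₁,y,z)). Then the least fixed point of g equals (μy. f₂(a₁, y, μz. f₃(a₁,y,z)), μz. f₃(a₁, μy. f₂(a₁,y,z), z)). -/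
namespace BekicAux

variable {α β : Type*} [CompleteLattice α] [CompleteLattice β]

lemma lfp_le {g : α → α} {a : α} (h : g a ≤ a) : lfp g ≤ a := sInf_le h

lemma le_lfp {g : α → α} {b : α} (h : ∀ a, g a ≤ a → b ≤ a) : b ≤ lfp g := le_sInf h

lemma lfp_fixed {g : α → α} (hg : Monotone g) : g (lfp g) = lfp g := by
  have h1 : g (lfp g) ≤ lfp g := le_lfp fun a ha => le_trans (hg (lfp_le ha)) ha
  exact le_antisymm h1 (lfp_le (hg h1))

lemma lfp_mono {g h : α → α} (hgh : ∀ x, g x ≤ h x) : lfp g ≤ lfp h :=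
  le_lfp fun a ha => lfp_le (le_trans (hgh a) ha)

lemma bekic_left (G : α × β → α × β) (hG : Monotone G) :
    lfp G = (lfp (fun y => (G (y, lfp fun z => (G (y, z)).2)).1),
             lfp fun z => (G (lfp fun y => (G (y, z)).1, z)).2) := by
  set H : α → β := fun y => lfp fun z => (G (y, z)).2 with hH
  set p : α := lfp (fun y => (G (y, H y)).1) with hp
  have hG2mono : ∀ y : α, Monotone fun z => (G (y, z)).2 := fun y z₁ z₂ h =>
    (hG (Prod.mk_le_mk.mpr ⟨le_rfl, h⟩)).2
  have hHmono : Monotone H := fun y₁ y₂ h =>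
    lfp_mono fun z => (hG (Prod.mk_le_mk.mpr ⟨h, le_rfl⟩)).2
  have hHfix : ∀ y, (G (y, H y)).2 = H y := fun y => lfp_fixed (hG2mono y)
  have hpmono : Monotone fun y => (G (y, H y)).1 := fun y₁ y₂ h =>
    (hG (Prod.mk_le_mk.mpr ⟨h, hHmono h⟩)).1
  have hpfix : (G (p, H p)).1 = p := lfp_fixed hpmono
  have key : lfp G = (p, H p) := by
    apply le_antisymm
    · exact lfp_le (Prod.mk_le_mk.mpr ⟨le_of_eq hpfix, le_of_eq (hHfix p)⟩ :
        G (p, H p) ≤ (p, H p))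
    · refine le_lfp fun ab hab => ?_
      obtain ⟨a, b⟩ := ab
      have h1 : (G (a, b)).1 ≤ a := hab.1
      have h2 : (G (a, b)).2 ≤ b := hab.2
      have hHab : H a ≤ b := lfp_le h2
      have hpa : p ≤ a := lfp_le
        (le_trans (hG (Prod.mk_le_mk.mpr ⟨le_rfl, hHab⟩)).1 h1)
      exact Prod.mk_le_mk.mpr ⟨hpa, le_trans (hHmono hpa) hHab⟩
  rw [key]
  congr 1
  -- second component: H p = lfp (fun z => (G (lfp fun y => (G (y,z)).1, z)).2)
  set K : β → α := fun z => lfp fun y => (G (y, z)).1 with hK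
  set q : β := lfp (fun z => (G (K z, z)).2) with hq
  have hG1mono : ∀ z : β, Monotone fun y => (G (y, z)).1 := fun z y₁ y₂ h =>
    (hG (Prod.mk_le_mk.mpr ⟨h, le_rfl⟩)).1
  have hKmono : Monotone K := fun z₁ z₂ h =>
    lfp_mono fun y => (hG (Prod.mk_le_mk.mpr ⟨le_rfl, h⟩)).1
  have hKfix : ∀ z, (G (K z, z)).1 = K z := fun z => lfp_fixed (hG1mono z)
  have hqmono : Monotone fun z => (G (K z, z)).2 := fun z₁ z₂ h =>
    (hG (Prod.mk_le_mk.mpr ⟨hKmono h, h⟩)).2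
  have hqfix : (G (K q, q)).2 = q := lfp_fixed hqmono
  have key2 : lfp G = (K q, q) := by
    apply le_antisymm
    · exact lfp_le (Prod.mk_le_mk.mpr ⟨le_of_eq (hKfix q), le_of_eq hqfix⟩ :
        G (K q, q) ≤ (K q, q))
    · refine le_lfp fun ab hab => ?_
      obtain ⟨a, b⟩ := ab
      have h1 : (G (a, b)).1 ≤ a := hab.1
      have h2 : (G (a, b)).2 ≤ b := hab.2
      have hKab : K b ≤ a := lfp_le h1
      have hqb : q ≤ b := lfp_le
        (le_trans (hG (Prod.mk_le_mk.mpr ⟨hKab, le_rfl⟩)).2 h2)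
      exact Prod.mk_le_mk.mpr ⟨le_trans (hKmono hqb) hKab, hqb⟩
  have : H p = (lfp G).2 := by rw [key]
  rw [this, key2]

end BekicAux

theorem bekic_specialized {L₁ L₂ L₃ : Type*} [CompleteLattice L₁] [CompleteLattice L₂]
    [CompleteLattice L₃]
    (f : L₁ × L₂ × L₃ → L₁ × L₂ × L₃) (hf : Monotone f) (a₁ : L₁)
    (g : L₂ × L₃ → L₂ × L₃)
    (hg : g = fun p => ((f (a₁, p.1, p.2)).2.1, (f (a₁, p.1, p.2)).2.2)) :
    lfp g = (lfp (fun y => (f (a₁, y, lfp (fun z => (f (a₁, y, z)).2.2))).2.1),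
             lfp (fun z => (f (a₁, lfp (fun y => (f (a₁, y, z)).2.1), z)).2.2)) := by
  subst hg
  have hgmono : Monotone fun p : L₂ × L₃ =>
      ((f (a₁, p.1, p.2)).2.1, (f (a₁, p.1, p.2)).2.2) := by
    intro p q h
    have : f (a₁, p.1, p.2) ≤ f (a₁, q.1, q.2) :=
      hf (Prod.mk_le_mk.mpr ⟨le_rfl, Prod.mk_le_mk.mpr ⟨h.1, h.2⟩⟩)
    exact Prod.mk_le_mk.mpr ⟨this.2.1, this.2.2⟩
  simpa using BekicAux.bekic_left _ hgmono
end

section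
/- Let E, F be complete lattices and f : E × F → E × F monotone with components f₁, f₂. For every pre-fixed point (u,v) of f (i.e., f₁(u,v) ≤ u and f₂(u,v) ≤ v), we have μx. f₁(x, μy. f₂(x,y)) ≤ u. -/
theorem bekic_le_prefixed {E F : Type*} [CompleteLattice E] [CompleteLattice F]
    (f : E × F → E × F) (hf : Monotone f) :
    ∀ u v, (f (u, v)).1 ≤ u → (f (u, v)).2 ≤ v →
      lfp (fun x => (f (x, lfp (fun y => (f (x, y)).2))).1) ≤ u := by
  intro u v h1 h2
  have hL : lfp (fun y => (f (u, y)).2) ≤ v := sInf_le h2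
  have : (f (u, lfp (fun y => (f (u, y)).2))).1 ≤ u :=
    le_trans ((hf (Prod.mk_le_mk.mpr ⟨le_refl u, hL⟩)).1) h1
  exact sInf_le this
end
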